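/- arXiv:1907.00485 — 4 statements merged into one kernel-verified Lean document; each statement's English description precedes it below -/
import Mathlib

section
/- Let f(x) = Σ_{ℓ=1}^{m1} h_ℓ(Σ_{i=1}^{m0} b_{iℓ} g_i(a_i^T x)) be a two-hidden-layer network as in the context, and let ε > 0. Then sup over x in the closed Euclidean unit ball B_1 of R^{m0} of the Frobenius norm ‖∇²f(x) − Δ_ε²f(x)‖_F is at most C_Δ · ε · m1 · m0^{3/2}, where C_Δ := 16 · max{η₂κ₁κ₂, κ₁³η₃, η₁κ₃}. -/
open Matrix

/-- The Frobenius norm of a real square matrix. -/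
noncomputable def frobNorm {n : ℕ} (M : Matrix (Fin n) (Fin n) ℝ) : ℝ :=
  Real.sqrt (∑ i, ∑ j, (M i j) ^ 2)

/-- The Hessian matrix of `f` at `x`, with entries the second partial derivatives. -/
noncomputable def hess {n : ℕ} (f : (Fin n → ℝ) → ℝ) (x : Fin n → ℝ) :
    Matrix (Fin n) (Fin n) ℝ :=
  Matrix.of fun i j => iteratedFDeriv ℝ 2 f x ![Pi.single i 1, Pi.single j 1]

/-- The second-order finite difference approximation of the Hessian of `f` at `x`
with step-size `ε`. -/
noncomputable def finDiff2 {n : ℕ} (f : (Fin n → ℝ) → ℝ) (ε : ℝ) (x : Fin n → ℝ) :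
    Matrix (Fin n) (Fin n) ℝ :=
  Matrix.of fun i j =>
    (f (x + ε • (Pi.single i 1 : Fin n → ℝ) + ε • (Pi.single j 1 : Fin n → ℝ)) - f (x + ε • (Pi.single i 1 : Fin n → ℝ))
      - f (x + ε • (Pi.single j 1 : Fin n → ℝ)) + f x) / ε ^ 2

open Set Finset

/-!
Two applications of the mean value theorem, along `e_j` and then along `e_i`, show that the
`(i, j)` finite difference equals the mixed partial `∂_i ∂_j f` at some point `x + ξ e_j + τ e_i`
with `ξ, τ ∈ (0, ε)`. Moving from `x` to that point changes `∂_i ∂_j f` by at most `2 ε B_ij`,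
where `B_ij` bounds the third derivatives `∂_w ∂_i ∂_j f` for `w ∈ {i, j}`.

For the network, every derivative of a hidden unit `z_ℓ` has the shape
`∑_p b_ℓp g_p^(k)(a_p ⬝ x) c_p`, which Cauchy–Schwarz bounds by `κ_k ‖c‖` because `‖b_ℓ‖ = 1`.
Differentiating `∑_ℓ h_ℓ (z_ℓ x)` three times then gives `B_ij ≤ m1 C √m0 ‖a e_i‖ ‖a e_j‖`
with `C = κ₁³η₃ + 3η₂κ₁κ₂ + η₁κ₃`, and `2 C ≤ 10 max(…) ≤ C_Δ`. As the rows of `a` are unit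
vectors, `∑_i ‖a e_i‖² = m0`, so the Frobenius norm of the error is at most `2 ε m1 C √m0 · m0`.
-/

section LineDeriv

variable {E : Type*} [AddCommGroup E] [Module ℝ E] {f f₁ : E → ℝ} {f' f₁' : ℝ} {x v : E}

lemma HasLineDerivAt.hasDerivAt_add_smul {t : ℝ} (hf : HasLineDerivAt ℝ f f' (x + t • v) v) :
    HasDerivAt (fun s : ℝ => f (x + s • v)) f' t := by
  have hf₀ : HasDerivAt (fun s : ℝ => f (x + t • v + s • v)) f' (t - t) := by
    rw [sub_self]; exact hf
  have e : (fun s : ℝ => f (x + s • v)) = fun s => f (x + t • v + (s - t) • v) := by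
    funext s; rw [add_assoc, ← add_smul, add_sub_cancel]
  rw [e]; exact hf₀.comp_sub_const t t

lemma HasLineDerivAt.add (hf : HasLineDerivAt ℝ f f' x v) (hf₁ : HasLineDerivAt ℝ f₁ f₁' x v) :
    HasLineDerivAt ℝ (fun y => f y + f₁ y) (f' + f₁') x v :=
  HasDerivAt.add hf hf₁

lemma HasLineDerivAt.mul (hf : HasLineDerivAt ℝ f f' x v) (hf₁ : HasLineDerivAt ℝ f₁ f₁' x v) :
    HasLineDerivAt ℝ (fun y => f y * f₁ y) (f' * f₁ x + f x * f₁') x v := by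
  have h := HasDerivAt.mul hf hf₁
  simp only [zero_smul, add_zero] at h
  exact h

lemma HasLineDerivAt.sum {ι : Type*} (s : Finset ι) {F : ι → E → ℝ} {F' : ι → ℝ}
    (hF : ∀ i ∈ s, HasLineDerivAt ℝ (F i) (F' i) x v) :
    HasLineDerivAt ℝ (fun y => ∑ i ∈ s, F i y) (∑ i ∈ s, F' i) x v :=
  HasDerivAt.fun_sum hF

lemma HasDerivAt.comp_hasLineDerivAt {φ : ℝ → ℝ} {φ' : ℝ} (hφ : HasDerivAt φ φ' (f x))
    (hf : HasLineDerivAt ℝ f f' x v) : HasLineDerivAt ℝ (fun y => φ (f y)) (φ' * f') x v := by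
  rw [← add_zero x, ← zero_smul ℝ v] at hφ
  exact hφ.comp 0 hf

end LineDeriv

section FiniteDifference

variable {E : Type*} [NormedAddCommGroup E] [NormedSpace ℝ E] {F D H T : E → ℝ} {u v w : E}

lemma abs_sub_le_of_hasLineDerivAt {B : ℝ} (hH : ∀ y, HasLineDerivAt ℝ H (T y) y w)
    (hT : ∀ y, |T y| ≤ B) (y : E) (s : ℝ) : |H (y + s • w) - H y| ≤ B * |s| := by
  simpa using Convex.norm_image_sub_le_of_norm_hasDerivWithin_le
    (fun t _ => (hH _).hasDerivAt_add_smul.hasDerivWithinAt)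
    (fun t _ => hT _) convex_univ (mem_univ 0) (mem_univ s)

lemma exists_secondDiff_eq_sq_mul (hD : ∀ y, HasLineDerivAt ℝ F (D y) y u)
    (hH : ∀ y, HasLineDerivAt ℝ D (H y) y v) (x : E) {ε : ℝ} (hε : 0 < ε) :
    ∃ ξ ∈ Ioo 0 ε, ∃ τ ∈ Ioo 0 ε,
      F (x + ε • v + ε • u) - F (x + ε • v) - F (x + ε • u) + F x
        = ε ^ 2 * H (x + ξ • u + τ • v) := by
  have hdiff (t : ℝ) : HasDerivAt (fun t : ℝ => F (x + ε • v + t • u) - F (x + t • u))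
      (D (x + t • u + ε • v) - D (x + t • u)) t := by
    rw [add_right_comm]
    exact (hD _).hasDerivAt_add_smul.sub (hD _).hasDerivAt_add_smul
  obtain ⟨ξ, hξ, hξeq⟩ := exists_hasDerivAt_eq_slope _ _ hε
    (HasDerivAt.continuousOn fun t _ => hdiff t) (fun t _ => hdiff t)
  have hmix (t : ℝ) : HasDerivAt (fun t : ℝ => D (x + ξ • u + t • v)) (H (x + ξ • u + t • v)) t :=
    (hH _).hasDerivAt_add_smul
  obtain ⟨τ, hτ, hτeq⟩ := exists_hasDerivAt_eq_slope _ _ hε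
    (HasDerivAt.continuousOn fun t _ => hmix t) (fun t _ => hmix t)
  refine ⟨ξ, hξ, τ, hτ, ?_⟩
  simp only [zero_smul, add_zero, sub_zero] at hξeq hτeq
  rw [eq_div_iff hε.ne'] at hξeq hτeq
  linear_combination -hξeq - ε * hτeq

lemma iteratedFDeriv_two_eq_of_hasLineDerivAt {x : E} (hF : ContDiff ℝ 2 F)
    (hD : ∀ y, HasLineDerivAt ℝ F (D y) y u) (hH : HasLineDerivAt ℝ D (H x) x v) :
    iteratedFDeriv ℝ 2 F x ![v, u] = H x := by
  obtain rfl : D = fun y => fderiv ℝ F y u := funext fun y =>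
    (hD y).unique ((hF.differentiable two_ne_zero y).hasFDerivAt.hasLineDerivAt u)
  have hD2 := (((hF.fderiv_right (m := 1) le_rfl).differentiable one_ne_zero x).hasFDerivAt
    |>.clm_apply (hasFDerivAt_const u x)).hasLineDerivAt v
  rw [iteratedFDeriv_two_apply]
  simpa using hD2.unique hH

theorem abs_iteratedFDeriv_two_sub_secondDiff_le (hF : ContDiff ℝ 2 F)
    (hD : ∀ y, HasLineDerivAt ℝ F (D y) y u) (hH : ∀ y, HasLineDerivAt ℝ D (H y) y v) {B : ℝ}
    (hHu : ∀ y s, |H (y + s • u) - H y| ≤ B * |s|) (hHv : ∀ y s, |H (y + s • v) - H y| ≤ B * |s|)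
    (x : E) {ε : ℝ} (hε : 0 < ε) :
    |iteratedFDeriv ℝ 2 F x ![v, u]
      - (F (x + ε • v + ε • u) - F (x + ε • v) - F (x + ε • u) + F x) / ε ^ 2| ≤ 2 * B * ε := by
  obtain ⟨ξ, hξ, τ, hτ, hFD⟩ := exists_secondDiff_eq_sq_mul hD hH x hε
  have hB : 0 ≤ B := by simpa using (abs_nonneg _).trans (hHu x 1)
  rw [iteratedFDeriv_two_eq_of_hasLineDerivAt hF hD (hH x), hFD,
    mul_div_cancel_left₀ _ (by positivity)]
  calc |H x - H (x + ξ • u + τ • v)|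
      ≤ |H x - H (x + ξ • u)| + |H (x + ξ • u) - H (x + ξ • u + τ • v)| := abs_sub_le _ _ _
    _ ≤ B * |ξ| + B * |τ| := add_le_add ((abs_sub_comm _ _).trans_le (hHu x ξ))
        ((abs_sub_comm _ _).trans_le (hHv _ τ))
    _ ≤ 2 * B * ε := by
        rw [abs_of_pos hξ.1, abs_of_pos hτ.1]; nlinarith [hξ.2, hτ.2]

end FiniteDifference

noncomputable def l2Norm {ι : Type*} [Fintype ι] (v : ι → ℝ) : ℝ := √(∑ p, v p ^ 2)

lemma abs_mul_le_mul_of_abs_le {x y X Y : ℝ} (hx : |x| ≤ X) (hy : |y| ≤ Y) :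
    |x * y| ≤ X * Y := by
  rw [abs_mul]
  exact mul_le_mul hx hy (abs_nonneg _) ((abs_nonneg _).trans hx)

section L2Norm

variable {ι : Type*} [Fintype ι]

lemma l2Norm_nonneg (v : ι → ℝ) : 0 ≤ l2Norm v := Real.sqrt_nonneg _

lemma l2Norm_sq (v : ι → ℝ) : l2Norm v ^ 2 = ∑ p, v p ^ 2 :=
  Real.sq_sqrt (sum_nonneg fun _ _ => sq_nonneg _)

lemma abs_sum_mul_le_l2Norm_mul (x y : ι → ℝ) : |∑ p, x p * y p| ≤ l2Norm x * l2Norm y := by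
  rw [l2Norm, l2Norm, ← Real.sqrt_mul (sum_nonneg fun _ _ => sq_nonneg _)]
  exact Real.abs_le_sqrt (sum_mul_sq_le_sq_mul_sq _ _ _)

lemma l2Norm_eq_one {v : ι → ℝ} (hv : ∑ p, v p ^ 2 = 1) : l2Norm v = 1 := by
  simp [l2Norm, hv]

lemma l2Norm_mul_le (x y : ι → ℝ) : l2Norm (x * y) ≤ l2Norm x * l2Norm y := by
  rw [l2Norm, l2Norm, l2Norm, ← Real.sqrt_mul (sum_nonneg fun _ _ => sq_nonneg _), sum_mul_sum]
  refine Real.sqrt_le_sqrt (sum_le_sum fun p _ => ?_)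
  rw [Pi.mul_apply, mul_pow]
  exact single_le_sum (f := fun q => x p ^ 2 * y q ^ 2) (fun q _ => by positivity) (mem_univ p)

lemma l2Norm_mul_le_of_abs_le {x : ι → ℝ} {K : ℝ} (hK : 0 ≤ K) (hx : ∀ p, |x p| ≤ K)
    (y : ι → ℝ) : l2Norm (x * y) ≤ K * l2Norm y := by
  rw [l2Norm, l2Norm, ← Real.sqrt_sq hK, ← Real.sqrt_mul (sq_nonneg K), mul_sum]
  refine Real.sqrt_le_sqrt (sum_le_sum fun p _ => ?_)
  rw [Pi.mul_apply, mul_pow]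
  exact mul_le_mul_of_nonneg_right (sq_le_sq.2 ((hx p).trans (le_abs_self K))) (sq_nonneg _)

end L2Norm

section Columns

variable {ι₀ ι₁ : Type*} [Fintype ι₀] [Fintype ι₁] [DecidableEq ι₀] {a : Matrix ι₁ ι₀ ℝ}

lemma l2Norm_mulVec_single_sq (a : Matrix ι₁ ι₀ ℝ) (i : ι₀) :
    l2Norm (a *ᵥ Pi.single i 1) ^ 2 = ∑ p, a p i ^ 2 := by
  rw [l2Norm_sq, mulVec_single_one]; rfl

lemma sum_l2Norm_mulVec_single_sq (ha : ∀ p, ∑ k, a p k ^ 2 = 1) :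
    ∑ i, l2Norm (a *ᵥ Pi.single i 1) ^ 2 = Fintype.card ι₁ := by
  simp_rw [l2Norm_mulVec_single_sq]
  rw [sum_comm]
  simp [ha]

lemma l2Norm_mulVec_single_le (ha : ∀ p, ∑ k, a p k ^ 2 = 1) (i : ι₀) :
    l2Norm (a *ᵥ Pi.single i 1) ≤ √(Fintype.card ι₁) := by
  rw [← Real.sqrt_sq (l2Norm_nonneg _), l2Norm_mulVec_single_sq]
  refine Real.sqrt_le_sqrt ?_
  calc ∑ p, a p i ^ 2 ≤ ∑ _p : ι₁, (1 : ℝ) := sum_le_sum fun p _ =>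
        ha p ▸ single_le_sum (fun k _ => sq_nonneg (a p k)) (mem_univ i)
    _ = Fintype.card ι₁ := by simp

end Columns

lemma frobNorm_le_of_abs_le_mul {n : ℕ} {M : Matrix (Fin n) (Fin n) ℝ} {K : ℝ} {c : Fin n → ℝ}
    (hM : ∀ i j, |M i j| ≤ K * (c i * c j)) : frobNorm M ≤ K * ∑ i, c i ^ 2 := by
  have hK : 0 ≤ K * ∑ i, c i ^ 2 := by
    rw [mul_sum]
    exact sum_nonneg fun i _ => (abs_nonneg _).trans ((hM i i).trans_eq (by ring))
  rw [frobNorm, Real.sqrt_le_left hK]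
  calc ∑ i, ∑ j, M i j ^ 2 ≤ ∑ i, ∑ j, (K * (c i * c j)) ^ 2 :=
        sum_le_sum fun i _ => sum_le_sum fun j _ => sq_le_sq.2 ((hM i j).trans (le_abs_self _))
    _ = (K * ∑ i, c i ^ 2) ^ 2 := by
        rw [mul_pow, sq (∑ i, c i ^ 2), sum_mul_sum, mul_sum]
        simp_rw [mul_sum, mul_pow]

lemma hasLineDerivAt_mulVec_apply {ι₀ ι₁ : Type*} [Fintype ι₀] (a : Matrix ι₁ ι₀ ℝ) (p : ι₁)
    (y w : ι₀ → ℝ) : HasLineDerivAt ℝ (fun y => (a *ᵥ y) p) ((a *ᵥ w) p) y w := by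
  have h := ((hasDerivAt_id (0 : ℝ)).mul_const ((a *ᵥ w) p)).const_add ((a *ᵥ y) p)
  simp only [id, one_mul] at h
  unfold HasLineDerivAt
  simpa [mulVec_add, mulVec_smul, mul_comm] using h

noncomputable section Network

variable {ι₀ ι₁ ι₂ : Type*} [Fintype ι₀] [Fintype ι₁]
  (a : Matrix ι₁ ι₀ ℝ) (b : Matrix ι₂ ι₁ ℝ) (g : ι₁ → ℝ → ℝ) (h : ι₂ → ℝ → ℝ)

def hiddenLayer (ℓ : ι₂) (y : ι₀ → ℝ) : ℝ := ∑ p, b ℓ p * g p ((a *ᵥ y) p)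

def network [Fintype ι₂] (y : ι₀ → ℝ) : ℝ := ∑ ℓ, h ℓ (hiddenLayer a b g ℓ y)

/-- With `c = a *ᵥ u₁ * ⋯ * a *ᵥ u_k`, this is the `k`-th derivative of `hiddenLayer a b g ℓ`
in the directions `u₁, …, u_k`. -/
def hiddenDeriv (k : ℕ) (c : ι₁ → ℝ) (ℓ : ι₂) (y : ι₀ → ℝ) : ℝ :=
  ∑ p, b ℓ p * iteratedDeriv k (g p) ((a *ᵥ y) p) * c p

lemma hiddenLayer_eq_hiddenDeriv_zero : hiddenLayer a b g = hiddenDeriv a b g 0 1 := by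
  ext ℓ y; simp [hiddenLayer, hiddenDeriv]

variable {a b g h}

lemma hasLineDerivAt_hiddenDeriv {k : ℕ} (hg : ∀ p, Differentiable ℝ (iteratedDeriv k (g p)))
    (c : ι₁ → ℝ) (ℓ : ι₂) (y w : ι₀ → ℝ) :
    HasLineDerivAt ℝ (hiddenDeriv a b g k c ℓ)
      (hiddenDeriv a b g (k + 1) (c * a *ᵥ w) ℓ y) y w := by
  unfold hiddenDeriv HasLineDerivAt
  refine HasDerivAt.fun_sum fun p _ => ?_
  refine ((((hg p _).hasDerivAt.comp 0 (hasLineDerivAt_mulVec_apply a p y w)).const_mul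
    (b ℓ p)).mul_const (c p)).congr_deriv ?_
  simp only [zero_smul, add_zero, iteratedDeriv_succ, Pi.mul_apply]
  ring

lemma hasLineDerivAt_hiddenLayer (hg : ∀ p, Differentiable ℝ (g p)) (ℓ : ι₂) (y w : ι₀ → ℝ) :
    HasLineDerivAt ℝ (hiddenLayer a b g ℓ) (hiddenDeriv a b g 1 (a *ᵥ w) ℓ y) y w := by
  rw [hiddenLayer_eq_hiddenDeriv_zero]
  simpa using hasLineDerivAt_hiddenDeriv (k := 0) (by simpa using hg) 1 ℓ y w

lemma hasLineDerivAt_iteratedDeriv_comp_hiddenLayer {φ : ℝ → ℝ} {k : ℕ}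
    (hφ : Differentiable ℝ (iteratedDeriv k φ)) (hg : ∀ p, Differentiable ℝ (g p)) (ℓ : ι₂)
    (y w : ι₀ → ℝ) :
    HasLineDerivAt ℝ (fun y => iteratedDeriv k φ (hiddenLayer a b g ℓ y))
      (iteratedDeriv (k + 1) φ (hiddenLayer a b g ℓ y) * hiddenDeriv a b g 1 (a *ᵥ w) ℓ y) y w := by
  rw [iteratedDeriv_succ]
  exact (hφ _).hasDerivAt.comp_hasLineDerivAt (hasLineDerivAt_hiddenLayer hg ℓ y w)

lemma abs_hiddenDeriv_le {k : ℕ} {K : ℝ} {ℓ : ι₂} (hb : ∑ p, b ℓ p ^ 2 = 1) (hK : 0 ≤ K)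
    (hg : ∀ p t, |iteratedDeriv k (g p) t| ≤ K) (c : ι₁ → ℝ) (y : ι₀ → ℝ) :
    |hiddenDeriv a b g k c ℓ y| ≤ K * l2Norm c :=
  calc |hiddenDeriv a b g k c ℓ y|
      = |∑ p, b ℓ p * ((fun p => iteratedDeriv k (g p) ((a *ᵥ y) p)) * c) p| := by
        simp only [hiddenDeriv, Pi.mul_apply, mul_assoc]
    _ ≤ l2Norm (b ℓ) * l2Norm ((fun p => iteratedDeriv k (g p) ((a *ᵥ y) p)) * c) :=
        abs_sum_mul_le_l2Norm_mul _ _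
    _ ≤ K * l2Norm c := by
        rw [l2Norm_eq_one hb, one_mul]
        exact l2Norm_mul_le_of_abs_le hK (fun p => hg p _) c

variable [Fintype ι₂]

lemma contDiff_network {n : WithTop ℕ∞} (hg : ∀ p, ContDiff ℝ n (g p))
    (hh : ∀ ℓ, ContDiff ℝ n (h ℓ)) : ContDiff ℝ n (network a b g h) := by
  unfold network hiddenLayer
  simp only [mulVec, dotProduct]
  fun_prop

variable (a b g h)

def networkD1 (u y : ι₀ → ℝ) : ℝ :=
  ∑ ℓ, iteratedDeriv 1 (h ℓ) (hiddenLayer a b g ℓ y) * hiddenDeriv a b g 1 (a *ᵥ u) ℓ y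

def networkD2 (v u y : ι₀ → ℝ) : ℝ :=
  ∑ ℓ, (iteratedDeriv 2 (h ℓ) (hiddenLayer a b g ℓ y) * hiddenDeriv a b g 1 (a *ᵥ v) ℓ y
      * hiddenDeriv a b g 1 (a *ᵥ u) ℓ y
    + iteratedDeriv 1 (h ℓ) (hiddenLayer a b g ℓ y) * hiddenDeriv a b g 2 (a *ᵥ u * a *ᵥ v) ℓ y)

def networkD3 (w v u y : ι₀ → ℝ) : ℝ :=
  ∑ ℓ, (iteratedDeriv 3 (h ℓ) (hiddenLayer a b g ℓ y) * hiddenDeriv a b g 1 (a *ᵥ w) ℓ y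
      * hiddenDeriv a b g 1 (a *ᵥ v) ℓ y * hiddenDeriv a b g 1 (a *ᵥ u) ℓ y
    + iteratedDeriv 2 (h ℓ) (hiddenLayer a b g ℓ y)
      * (hiddenDeriv a b g 2 (a *ᵥ v * a *ᵥ w) ℓ y * hiddenDeriv a b g 1 (a *ᵥ u) ℓ y
        + hiddenDeriv a b g 1 (a *ᵥ v) ℓ y * hiddenDeriv a b g 2 (a *ᵥ u * a *ᵥ w) ℓ y
        + hiddenDeriv a b g 1 (a *ᵥ w) ℓ y * hiddenDeriv a b g 2 (a *ᵥ u * a *ᵥ v) ℓ y)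
    + iteratedDeriv 1 (h ℓ) (hiddenLayer a b g ℓ y)
      * hiddenDeriv a b g 3 (a *ᵥ u * a *ᵥ v * a *ᵥ w) ℓ y)

variable {a b g h}

lemma hasLineDerivAt_network (hg : ∀ p, ContDiff ℝ 1 (g p)) (hh : ∀ ℓ, ContDiff ℝ 1 (h ℓ))
    (u y : ι₀ → ℝ) : HasLineDerivAt ℝ (network a b g h) (networkD1 a b g h u y) y u :=
  HasLineDerivAt.sum _ fun ℓ _ => by
    simpa using hasLineDerivAt_iteratedDeriv_comp_hiddenLayer (k := 0)
      (by simpa using (hh ℓ).differentiable one_ne_zero)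
      (fun p => (hg p).differentiable one_ne_zero) ℓ y u

lemma hasLineDerivAt_networkD1 (hg : ∀ p, ContDiff ℝ 2 (g p)) (hh : ∀ ℓ, ContDiff ℝ 2 (h ℓ))
    (v u y : ι₀ → ℝ) :
    HasLineDerivAt ℝ (networkD1 a b g h u) (networkD2 a b g h v u y) y v :=
  HasLineDerivAt.sum _ fun ℓ _ =>
    (hasLineDerivAt_iteratedDeriv_comp_hiddenLayer
      ((hh ℓ).differentiable_iteratedDeriv 1 (by norm_num))
      (fun p => (hg p).differentiable two_ne_zero) ℓ y v).mul
    (hasLineDerivAt_hiddenDeriv (fun p => (hg p).differentiable_iteratedDeriv 1 (by norm_num))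
      _ ℓ y v)

lemma hasLineDerivAt_networkD2 (hg : ∀ p, ContDiff ℝ 3 (g p)) (hh : ∀ ℓ, ContDiff ℝ 3 (h ℓ))
    (w v u y : ι₀ → ℝ) :
    HasLineDerivAt ℝ (networkD2 a b g h v u) (networkD3 a b g h w v u y) y w := by
  have hg1 p := (hg p).differentiable_iteratedDeriv 1 (by norm_num)
  have hg2 p := (hg p).differentiable_iteratedDeriv 2 (by norm_num)
  have hz k (hk : k < 3) ℓ := hasLineDerivAt_iteratedDeriv_comp_hiddenLayer (a := a) (b := b)
      ((hh ℓ).differentiable_iteratedDeriv k (by exact_mod_cast hk))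
      (fun p => (hg p).differentiable (by norm_num)) ℓ y w
  refine HasLineDerivAt.sum _ fun ℓ _ => ?_
  refine ((((hz 2 (by norm_num) ℓ).mul (hasLineDerivAt_hiddenDeriv hg1 _ ℓ y w)).mul
    (hasLineDerivAt_hiddenDeriv hg1 _ ℓ y w)).add
    ((hz 1 (by norm_num) ℓ).mul (hasLineDerivAt_hiddenDeriv hg2 _ ℓ y w))).congr_deriv ?_
  ring

def thirdDerivConst (κ η : ℕ → ℝ) : ℝ := κ 1 ^ 3 * η 3 + 3 * (η 2 * κ 1 * κ 2) + η 1 * κ 3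

lemma thirdDerivConst_le (κ η : ℕ → ℝ) :
    thirdDerivConst κ η ≤ 5 * max (max (η 2 * κ 1 * κ 2) (κ 1 ^ 3 * η 3)) (η 1 * κ 3) := by
  unfold thirdDerivConst
  linarith [le_max_left (max (η 2 * κ 1 * κ 2) (κ 1 ^ 3 * η 3)) (η 1 * κ 3),
    le_max_right (max (η 2 * κ 1 * κ 2) (κ 1 ^ 3 * η 3)) (η 1 * κ 3),
    le_max_left (η 2 * κ 1 * κ 2) (κ 1 ^ 3 * η 3), le_max_right (η 2 * κ 1 * κ 2) (κ 1 ^ 3 * η 3)]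

lemma abs_networkD3_le {κ η : ℕ → ℝ} (hb : ∀ ℓ, ∑ p, b ℓ p ^ 2 = 1)
    (hgκ : ∀ p, ∀ k ≤ 3, ∀ t, |iteratedDeriv k (g p) t| ≤ κ k) (hκ : ∀ k ≤ 3, 0 ≤ κ k)
    (hhη : ∀ ℓ, ∀ k ≤ 3, ∀ t, |iteratedDeriv k (h ℓ) t| ≤ η k) (w v u y : ι₀ → ℝ) :
    |networkD3 a b g h w v u y|
      ≤ Fintype.card ι₂ * thirdDerivConst κ η
        * (l2Norm (a *ᵥ w) * l2Norm (a *ᵥ v) * l2Norm (a *ᵥ u)) := by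
  have hd k (hk : k ≤ 3) ℓ := abs_hiddenDeriv_le (a := a) (hb ℓ) (hκ k hk) (fun p => hgκ p k hk)
  have hP x ℓ := hd 1 (by norm_num) ℓ (a *ᵥ x) y
  have hQ x x' ℓ : |hiddenDeriv a b g 2 (a *ᵥ x * a *ᵥ x') ℓ y|
      ≤ κ 2 * (l2Norm (a *ᵥ x) * l2Norm (a *ᵥ x')) :=
    (hd 2 (by norm_num) ℓ _ y).trans
      (mul_le_mul_of_nonneg_left (l2Norm_mul_le _ _) (hκ 2 (by norm_num)))
  have hR ℓ : |hiddenDeriv a b g 3 (a *ᵥ u * a *ᵥ v * a *ᵥ w) ℓ y|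
      ≤ κ 3 * (l2Norm (a *ᵥ u) * l2Norm (a *ᵥ v) * l2Norm (a *ᵥ w)) := by
    refine (hd 3 le_rfl ℓ _ y).trans (mul_le_mul_of_nonneg_left ?_ (hκ 3 le_rfl))
    exact (l2Norm_mul_le _ _).trans
      (mul_le_mul_of_nonneg_right (l2Norm_mul_le _ _) (l2Norm_nonneg _))
  set Nu := l2Norm (a *ᵥ u)
  set Nv := l2Norm (a *ᵥ v)
  set Nw := l2Norm (a *ᵥ w)
  refine (abs_sum_le_sum_abs _ _).trans ?_
  calc _ ≤ ∑ _ℓ : ι₂, thirdDerivConst κ η * (Nw * Nv * Nu) := sum_le_sum fun ℓ _ => ?_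
    _ = _ := by simp [mul_assoc]
  have hh k (hk : k ≤ 3) := hhη ℓ k hk (hiddenLayer a b g ℓ y)
  have hA := abs_mul_le_mul_of_abs_le (abs_mul_le_mul_of_abs_le
    (abs_mul_le_mul_of_abs_le (hh 3 le_rfl) (hP w ℓ)) (hP v ℓ)) (hP u ℓ)
  have hB := abs_mul_le_mul_of_abs_le (hh 2 (by norm_num)) ((abs_add_three _ _ _).trans
    (add_le_add_three (abs_mul_le_mul_of_abs_le (hQ v w ℓ) (hP u ℓ))
      (abs_mul_le_mul_of_abs_le (hP v ℓ) (hQ u w ℓ))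
      (abs_mul_le_mul_of_abs_le (hP w ℓ) (hQ u v ℓ))))
  have hC := abs_mul_le_mul_of_abs_le (hh 1 (by norm_num)) (hR ℓ)
  exact (abs_add_three _ _ _).trans
    ((add_le_add_three hA hB hC).trans_eq (by unfold thirdDerivConst; ring))

end Network

theorem abs_hess_network_sub_finDiff2_le {n : ℕ} {ι₁ ι₂ : Type*} [Fintype ι₁] [Fintype ι₂]
    {a : Matrix ι₁ (Fin n) ℝ} {b : Matrix ι₂ ι₁ ℝ} {g : ι₁ → ℝ → ℝ} {h : ι₂ → ℝ → ℝ}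
    {κ η : ℕ → ℝ} (ha : ∀ p, ∑ k, a p k ^ 2 = 1) (hb : ∀ ℓ, ∑ p, b ℓ p ^ 2 = 1)
    (hg : ∀ p, ContDiff ℝ 3 (g p)) (hh : ∀ ℓ, ContDiff ℝ 3 (h ℓ))
    (hgκ : ∀ p, ∀ k ≤ 3, ∀ t, |iteratedDeriv k (g p) t| ≤ κ k) (hκ : ∀ k ≤ 3, 0 ≤ κ k)
    (hhη : ∀ ℓ, ∀ k ≤ 3, ∀ t, |iteratedDeriv k (h ℓ) t| ≤ η k) (hη : ∀ k ≤ 3, 0 ≤ η k)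
    (x : Fin n → ℝ) {ε : ℝ} (hε : 0 < ε) (i j : Fin n) :
    |(hess (network a b g h) x - finDiff2 (network a b g h) ε x) i j|
      ≤ 2 * Fintype.card ι₂ * thirdDerivConst κ η * √(Fintype.card ι₁) * ε
        * (l2Norm (a *ᵥ Pi.single i 1) * l2Norm (a *ᵥ Pi.single j 1)) := by
  set C := thirdDerivConst κ η
  set N := fun i : Fin n => l2Norm (a *ᵥ Pi.single i 1)
  have hC : 0 ≤ C := by
    have := hκ 1 (by norm_num); have := hκ 2 (by norm_num); have := hκ 3 le_rfl
    have := hη 1 (by norm_num); have := hη 2 (by norm_num); have := hη 3 le_rfl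
    unfold C thirdDerivConst
    positivity
  have hLip (w : Fin n) (y : Fin n → ℝ) (s : ℝ) :
      |networkD2 a b g h (Pi.single i 1) (Pi.single j 1) (y + s • Pi.single w 1)
        - networkD2 a b g h (Pi.single i 1) (Pi.single j 1) y|
        ≤ Fintype.card ι₂ * C * (√(Fintype.card ι₁) * N i * N j) * |s| :=
    (abs_sub_le_of_hasLineDerivAt
      (fun y => hasLineDerivAt_networkD2 hg hh (Pi.single w 1) (Pi.single i 1) (Pi.single j 1) y)
      (fun y => abs_networkD3_le hb hgκ hκ hhη _ _ _ y) y s).trans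
    (by gcongr; exacts [l2Norm_nonneg _, l2Norm_nonneg _, l2Norm_mulVec_single_le ha w])
  have hFD := abs_iteratedFDeriv_two_sub_secondDiff_le
    (contDiff_network (fun p => (hg p).of_le (by norm_num)) (fun ℓ => (hh ℓ).of_le (by norm_num)))
    (fun y => hasLineDerivAt_network (fun p => (hg p).of_le (by norm_num))
      (fun ℓ => (hh ℓ).of_le (by norm_num)) _ y)
    (fun y => hasLineDerivAt_networkD1 (fun p => (hg p).of_le (by norm_num))
      (fun ℓ => (hh ℓ).of_le (by norm_num)) _ _ y) (hLip j) (hLip i) x hε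
  simp only [hess, finDiff2, Matrix.sub_apply, Matrix.of_apply]
  exact hFD.trans_eq (by ring)

/-- finite difference approximation error of the Hessian of a two-hidden-layer
network, uniformly over the closed unit ball. -/
theorem finite_difference_hessian_bound
    (m0 m1 : ℕ) (hm0 : 0 < m0) (hm1 : 0 < m1)
    (a : Fin m0 → Fin m0 → ℝ) (b : Fin m1 → Fin m0 → ℝ)
    (ha : ∀ i, ∑ k, a i k ^ 2 = 1) (hb : ∀ ℓ, ∑ i, b ℓ i ^ 2 = 1)
    (g : Fin m0 → ℝ → ℝ) (h : Fin m1 → ℝ → ℝ)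
    (hg : ∀ i, ContDiff ℝ 3 (g i)) (hh : ∀ ℓ, ContDiff ℝ 3 (h ℓ))
    (κ η : ℕ → ℝ)
    (hgb : ∀ i, ∀ k ≤ 3, ∀ t : ℝ, |iteratedDeriv k (g i) t| ≤ κ k)
    (hhb : ∀ ℓ, ∀ k ≤ 3, ∀ t : ℝ, |iteratedDeriv k (h ℓ) t| ≤ η k)
    (f : (Fin m0 → ℝ) → ℝ)
    (hf : ∀ x, f x = ∑ ℓ, h ℓ (∑ i, b ℓ i * g i (∑ k, a i k * x k)))
    (ε : ℝ) (hε : 0 < ε)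
    (CΔ : ℝ)
    (hC : CΔ = 16 * max (max (η 2 * κ 1 * κ 2) (κ 1 ^ 3 * η 3)) (η 1 * κ 3)) :
    ∀ x : Fin m0 → ℝ, (∑ k, x k ^ 2) ≤ 1 →
      frobNorm (hess f x - finDiff2 f ε x) ≤ CΔ * ε * m1 * (m0 : ℝ) ^ ((3 : ℝ) / 2) := by
  intro x _
  obtain rfl : f = network a b g h := funext hf
  have hκ : ∀ k ≤ 3, 0 ≤ κ k := fun k hk => (abs_nonneg _).trans (hgb ⟨0, hm0⟩ k hk 0)
  have hη : ∀ k ≤ 3, 0 ≤ η k := fun k hk => (abs_nonneg _).trans (hhb ⟨0, hm1⟩ k hk 0)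
  have hfrob := frobNorm_le_of_abs_le_mul
    (abs_hess_network_sub_finDiff2_le ha hb hg hh hgb hκ hhb hη x hε)
  rw [sum_l2Norm_mulVec_single_sq ha, Fintype.card_fin, Fintype.card_fin] at hfrob
  have hCΔ : 2 * thirdDerivConst κ η ≤ CΔ := by
    have := thirdDerivConst_le κ η
    have := mul_nonneg (hη 1 (by norm_num)) (hκ 3 le_rfl)
    rw [hC]
    linarith [le_max_right (max (η 2 * κ 1 * κ 2) (κ 1 ^ 3 * η 3)) (η 1 * κ 3)]
  have hpow : (m0 : ℝ) ^ ((3 : ℝ) / 2) = √m0 * m0 := by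
    rw [show (3 : ℝ) / 2 = 1 / 2 + 1 by norm_num, Real.rpow_add (by positivity),
      Real.sqrt_eq_rpow, Real.rpow_one]
  calc _ ≤ _ := hfrob
    _ = 2 * thirdDerivConst κ η * (ε * m1 * (√m0 * m0)) := by ring
    _ ≤ CΔ * (ε * m1 * (√m0 * m0)) := by gcongr
    _ = _ := by rw [hpow]; ring
end

section
/- Suppose there exist diagonal sign matrices S_A ∈ R^{m0×m0}, S_V ∈ R^{m1×m1} (diagonal entries ±1) and permutation matrices π_A ∈ R^{m0×m0}, π_V ∈ R^{m1×m1} such that A·π_A = Â·S_A and V·π_V = V̂·S_V. Then f(x) = f̃(x; S_A, S_V, π_A^T θ, π_V^T τ) for all x ∈ R^{m0}, where f̃(x; D, D', w, z) := 1^T·φ(D'·B̂^T·φ(D·Â^T x + w) + z) with B̂ = B̂(D, w) the matrix whose ℓ-th column is b̂_ℓ := diag(φ'(w))^{−1}·D·Â^{−1}·v̂_ℓ / ‖diag(φ'(w))^{−1}·D·Â^{−1}·v̂_ℓ‖ and v̂_ℓ the ℓ-th column of V̂ (φ and φ' applied entrywise, diag(φ'(w)) denoting the diagonal matrix with entries φ'(w_i)).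 -/
open Matrix

noncomputable def vnorm {n : ℕ} (v : Fin n → ℝ) : ℝ := Real.sqrt (∑ i, v i ^ 2)

lemma vnorm_nonneg {n : ℕ} (v : Fin n → ℝ) : 0 ≤ vnorm v := Real.sqrt_nonneg _

lemma vnorm_pos {n : ℕ} (v : Fin n → ℝ) (h : v ≠ 0) : 0 < vnorm v := by
  rcases lt_or_eq_of_le (vnorm_nonneg v) with h' | h'
  · exact h'
  · exfalso; apply h
    have hs : ∑ i, v i ^ 2 ≤ 0 := Real.sqrt_eq_zero'.mp h'.symm
    have hz : ∑ i, v i ^ 2 = 0 :=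
      le_antisymm hs (Finset.sum_nonneg fun i _ => sq_nonneg _)
    funext i
    have := (Finset.sum_eq_zero_iff_of_nonneg (fun i _ => sq_nonneg (v i))).mp hz i
      (Finset.mem_univ i)
    exact (pow_eq_zero_iff two_ne_zero).mp this

lemma vnorm_smul {n : ℕ} (a : ℝ) (v : Fin n → ℝ) :
    vnorm (fun i => a * v i) = |a| * vnorm v := by
  unfold vnorm
  rw [← Real.sqrt_sq_eq_abs, ← Real.sqrt_mul (sq_nonneg a)]
  congr 1
  rw [Finset.mul_sum]
  exact Finset.sum_congr rfl fun i _ => by ring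

lemma vnorm_comp {n : ℕ} (σ : Equiv.Perm (Fin n)) (v : Fin n → ℝ) :
    vnorm (fun i => v (σ i)) = vnorm v := by
  unfold vnorm
  congr 1
  exact Equiv.sum_comp σ (fun i => v i ^ 2)

lemma permT_mulVec {n : ℕ} (σ : Equiv.Perm (Fin n)) (y : Fin n → ℝ) :
    (Matrix.of fun i j => if i = σ j then (1 : ℝ) else 0)ᵀ.mulVec y = fun i => y (σ i) := by
  funext i
  simp only [Matrix.mulVec, dotProduct, Matrix.transpose_apply, Matrix.of_apply,
    ite_mul, one_mul, zero_mul]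
  rw [Finset.sum_ite_eq' Finset.univ (σ i) y]
  simp

lemma perm_mulVec {n : ℕ} (σ : Equiv.Perm (Fin n)) (z : Fin n → ℝ) :
    (Matrix.of fun i j => if i = σ j then (1 : ℝ) else 0).mulVec z = fun i => z (σ.symm i) := by
  funext i
  simp only [Matrix.mulVec, dotProduct, Matrix.of_apply, ite_mul, one_mul, zero_mul]
  have : ∀ j : Fin n, (i = σ j) = (j = σ.symm i) := by
    intro j
    rw [eq_iff_iff, Equiv.eq_symm_apply]
    exact eq_comm
  simp only [this]
  rw [Finset.sum_ite_eq' Finset.univ (σ.symm i) z]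
  simp

/-- reparametrization of a two-layer network using the recovered entangled
weights (Proposition on the representation of `f` via `f̃`). -/
theorem network_reparametrization
    (m0 m1 : ℕ) (φ : ℝ → ℝ) (hφ : Differentiable ℝ φ)
    (A : Matrix (Fin m0) (Fin m0) ℝ) (hA : IsUnit A.det)
    (B : Matrix (Fin m0) (Fin m1) ℝ) (hB : ∀ ℓ, vnorm (fun i => B i ℓ) = 1)
    (θ : Fin m0 → ℝ) (τ : Fin m1 → ℝ)
    (f : (Fin m0 → ℝ) → ℝ)
    (hf : ∀ x, f x = ∑ ℓ, φ ((Bᵀ.mulVec fun i => φ ((Aᵀ.mulVec x) i + θ i)) ℓ + τ ℓ))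
    (G : Matrix (Fin m0) (Fin m0) ℝ) (hG : G = Matrix.diagonal fun i => deriv φ (θ i))
    (hG0 : ∀ i, deriv φ (θ i) ≠ 0)
    (hAGb : ∀ ℓ : Fin m1, A.mulVec (G.mulVec (fun i => B i ℓ)) ≠ 0)
    (V : Matrix (Fin m0) (Fin m1) ℝ)
    (hV : ∀ ℓ i, V i ℓ = (vnorm (A.mulVec (G.mulVec (fun k => B k ℓ))))⁻¹ *
      (A.mulVec (G.mulVec (fun k => B k ℓ))) i)
    (Ahat : Matrix (Fin m0) (Fin m0) ℝ) (hAhat : IsUnit Ahat.det)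
    (Vhat : Matrix (Fin m0) (Fin m1) ℝ)
    (SA : Matrix (Fin m0) (Fin m0) ℝ)
    (hSA : ∃ s : Fin m0 → ℝ, (∀ i, s i = 1 ∨ s i = -1) ∧ SA = Matrix.diagonal s)
    (SV : Matrix (Fin m1) (Fin m1) ℝ)
    (hSV : ∃ s : Fin m1 → ℝ, (∀ i, s i = 1 ∨ s i = -1) ∧ SV = Matrix.diagonal s)
    (πA : Matrix (Fin m0) (Fin m0) ℝ)
    (hπA : ∃ σ : Equiv.Perm (Fin m0), πA = Matrix.of fun i j => if i = σ j then (1 : ℝ) else 0)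
    (πV : Matrix (Fin m1) (Fin m1) ℝ)
    (hπV : ∃ σ : Equiv.Perm (Fin m1), πV = Matrix.of fun i j => if i = σ j then (1 : ℝ) else 0)
    (hAeq : A * πA = Ahat * SA) (hVeq : V * πV = Vhat * SV)
    (hc : ∀ ℓ : Fin m1,
      (Matrix.diagonal fun k => (deriv φ ((πAᵀ.mulVec θ) k))⁻¹).mulVec
        (SA.mulVec (Ahat⁻¹.mulVec (fun k => Vhat k ℓ))) ≠ 0)
    (Bhat : Matrix (Fin m0) (Fin m1) ℝ)
    (hBhat : ∀ ℓ i, Bhat i ℓ =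
      (vnorm ((Matrix.diagonal fun k => (deriv φ ((πAᵀ.mulVec θ) k))⁻¹).mulVec
          (SA.mulVec (Ahat⁻¹.mulVec (fun k => Vhat k ℓ)))))⁻¹ *
        ((Matrix.diagonal fun k => (deriv φ ((πAᵀ.mulVec θ) k))⁻¹).mulVec
          (SA.mulVec (Ahat⁻¹.mulVec (fun k => Vhat k ℓ)))) i) :
    ∀ x, f x = ∑ ℓ, φ (((SV * Bhatᵀ).mulVec
        fun i => φ (((SA * Ahatᵀ).mulVec x) i + (πAᵀ.mulVec θ) i)) ℓ + (πVᵀ.mulVec τ) ℓ) := by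
  obtain ⟨sA, hsA1, hSAd⟩ := hSA
  obtain ⟨sV, hsV1, hSVd⟩ := hSV
  obtain ⟨σA, hπAd⟩ := hπA
  obtain ⟨σV, hπVd⟩ := hπV
  have hsA2 : ∀ i, sA i * sA i = 1 := fun i => by rcases hsA1 i with h | h <;> rw [h] <;> norm_num
  have hsV2 : ∀ i, sV i * sV i = 1 := fun i => by rcases hsV1 i with h | h <;> rw [h] <;> norm_num
  have hsVabs : ∀ i, |sV i| = 1 := fun i => by rcases hsV1 i with h | h <;> rw [h] <;> norm_num
  have hπAT : ∀ y : Fin m0 → ℝ, πAᵀ.mulVec y = fun i => y (σA i) := fun y => by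
    rw [hπAd]; exact permT_mulVec σA y
  have hπAm : ∀ z : Fin m0 → ℝ, πA.mulVec z = fun i => z (σA.symm i) := fun z => by
    rw [hπAd]; exact perm_mulVec σA z
  have hπVT : ∀ y : Fin m1 → ℝ, πVᵀ.mulVec y = fun i => y (σV i) := fun y => by
    rw [hπVd]; exact permT_mulVec σV y
  have hθ : ∀ i, (πAᵀ.mulVec θ) i = θ (σA i) := fun i => by rw [hπAT]
  have hSAA : SA * Ahatᵀ = πAᵀ * Aᵀ := by
    have h := congrArg Matrix.transpose hAeq
    rw [Matrix.transpose_mul, Matrix.transpose_mul] at h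
    rw [hSAd] at h ⊢
    rw [Matrix.diagonal_transpose] at h
    exact h.symm
  have hVhat : ∀ i ℓ, Vhat i ℓ = sV ℓ * V i (σV ℓ) := by
    intro i ℓ
    have h := congrFun (congrFun hVeq i) ℓ
    have h1 : (V * πV) i ℓ = V i (σV ℓ) := by
      rw [hπVd, Matrix.mul_apply]
      simp only [Matrix.of_apply, mul_ite, mul_one, mul_zero]
      rw [Finset.sum_ite_eq' Finset.univ (σV ℓ) (fun j => V i j)]
      simp
    have h2 : (Vhat * SV) i ℓ = Vhat i ℓ * sV ℓ := by
      rw [hSVd, Matrix.mul_diagonal]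
    rw [h1, h2] at h
    calc Vhat i ℓ = Vhat i ℓ * (sV ℓ * sV ℓ) := by rw [hsV2]; ring
      _ = sV ℓ * (Vhat i ℓ * sV ℓ) := by ring
      _ = sV ℓ * V i (σV ℓ) := by rw [← h]
  have hGm : ∀ (b : Fin m0 → ℝ), G.mulVec b = fun j => deriv φ (θ j) * b j := fun b => by
    funext j; rw [hG, Matrix.mulVec_diagonal]
  set c : Fin m1 → ℝ := fun ℓ => vnorm (A.mulVec (G.mulVec (fun k => B k ℓ))) with hcdef
  have hcpos : ∀ ℓ, 0 < c ℓ := fun ℓ => vnorm_pos _ (hAGb ℓ)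
  have hSASA : SA * SA = 1 := by
    rw [hSAd, Matrix.diagonal_mul_diagonal]
    rw [show (fun i => sA i * sA i) = fun _ => (1:ℝ) from funext hsA2, Matrix.diagonal_one]
  have hkey : ∀ ℓ, SA.mulVec (Ahat⁻¹.mulVec (fun k => Vhat k ℓ)) =
      fun i => sV ℓ * ((c (σV ℓ))⁻¹ * (deriv φ (θ (σA i)) * B (σA i) (σV ℓ))) := by
    intro ℓ
    set z : Fin m0 → ℝ :=
      fun i => sV ℓ * ((c (σV ℓ))⁻¹ * (deriv φ (θ (σA i)) * B (σA i) (σV ℓ))) with hzdef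
    have hAt : Ahat.mulVec (SA.mulVec z) = fun k => Vhat k ℓ := by
      rw [Matrix.mulVec_mulVec, ← hAeq, ← Matrix.mulVec_mulVec, hπAm]
      funext k
      have hz2 : (fun i => z (σA.symm i)) =
          fun i => sV ℓ * (c (σV ℓ))⁻¹ * (deriv φ (θ i) * B i (σV ℓ)) := by
        funext i; simp only [hzdef, Equiv.apply_symm_apply]; ring
      rw [hz2]
      have h3 : A.mulVec (fun i => sV ℓ * (c (σV ℓ))⁻¹ * (deriv φ (θ i) * B i (σV ℓ))) k
          = sV ℓ * (c (σV ℓ))⁻¹ * (A.mulVec (G.mulVec (fun k => B k (σV ℓ)))) k := by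
        rw [hGm]
        simp only [Matrix.mulVec, dotProduct, Finset.mul_sum]
        exact Finset.sum_congr rfl fun j _ => by ring
      rw [h3, hVhat k ℓ, hV (σV ℓ) k]
      simp only [hcdef]
      ring
    have hinv : Ahat⁻¹.mulVec (fun k => Vhat k ℓ) = SA.mulVec z := by
      rw [← hAt, Matrix.mulVec_mulVec, Matrix.nonsing_inv_mul Ahat hAhat, Matrix.one_mulVec]
    rw [hinv, Matrix.mulVec_mulVec, hSASA, Matrix.one_mulVec]
  have hu : ∀ ℓ, ((Matrix.diagonal fun k => (deriv φ ((πAᵀ.mulVec θ) k))⁻¹).mulVec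
        (SA.mulVec (Ahat⁻¹.mulVec (fun k => Vhat k ℓ)))) =
      fun i => (sV ℓ * (c (σV ℓ))⁻¹) * B (σA i) (σV ℓ) := by
    intro ℓ
    funext i
    rw [hkey ℓ, Matrix.mulVec_diagonal, hθ]
    have h0 := hG0 (σA i)
    have h7 : (deriv φ (θ (σA i)))⁻¹ *
        (sV ℓ * ((c (σV ℓ))⁻¹ * (deriv φ (θ (σA i)) * B (σA i) (σV ℓ))))
        = ((deriv φ (θ (σA i)))⁻¹ * deriv φ (θ (σA i))) *
          ((sV ℓ * (c (σV ℓ))⁻¹) * B (σA i) (σV ℓ)) := by ring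
    rw [h7, inv_mul_cancel₀ h0, one_mul]
  have hnorm : ∀ ℓ, vnorm ((Matrix.diagonal fun k => (deriv φ ((πAᵀ.mulVec θ) k))⁻¹).mulVec
        (SA.mulVec (Ahat⁻¹.mulVec (fun k => Vhat k ℓ)))) = (c (σV ℓ))⁻¹ := by
    intro ℓ
    rw [hu ℓ, vnorm_smul]
    have h1 : vnorm (fun i => B (σA i) (σV ℓ)) = 1 := by
      rw [vnorm_comp σA (fun i => B i (σV ℓ)), hB]
    rw [h1, mul_one, abs_mul, hsVabs, one_mul, abs_inv, abs_of_pos (hcpos (σV ℓ))]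
  have hBB : ∀ i ℓ, Bhat i ℓ = sV ℓ * B (σA i) (σV ℓ) := by
    intro i ℓ
    have hcne : c (σV ℓ) ≠ 0 := ne_of_gt (hcpos _)
    rw [hBhat ℓ i, hnorm ℓ, congrFun (hu ℓ) i, inv_inv]
    have h6 : c (σV ℓ) * ((sV ℓ * (c (σV ℓ))⁻¹) * B (σA i) (σV ℓ))
        = (c (σV ℓ) * (c (σV ℓ))⁻¹) * (sV ℓ * B (σA i) (σV ℓ)) := by ring
    rw [h6, mul_inv_cancel₀ hcne, one_mul]
  intro x
  rw [hf x]
  have hq : (fun i => φ (((SA * Ahatᵀ).mulVec x) i + (πAᵀ.mulVec θ) i)) =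
      fun i => φ ((Aᵀ.mulVec x) (σA i) + θ (σA i)) := by
    funext i
    rw [hSAA, ← Matrix.mulVec_mulVec, hπAT, hθ]
  have hRHS : ∀ ℓ, ((SV * Bhatᵀ).mulVec
        (fun i => φ (((SA * Ahatᵀ).mulVec x) i + (πAᵀ.mulVec θ) i))) ℓ + (πVᵀ.mulVec τ) ℓ
      = (Bᵀ.mulVec fun i => φ ((Aᵀ.mulVec x) i + θ i)) (σV ℓ) + τ (σV ℓ) := by
    intro ℓ
    rw [hq, hπVT, ← Matrix.mulVec_mulVec, hSVd, Matrix.mulVec_diagonal]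
    congr 1
    have h4 : (Bhatᵀ.mulVec (fun i => φ ((Aᵀ.mulVec x) (σA i) + θ (σA i)))) ℓ
        = sV ℓ * ∑ i, B (σA i) (σV ℓ) * φ ((Aᵀ.mulVec x) (σA i) + θ (σA i)) := by
      simp only [Matrix.mulVec, dotProduct, Matrix.transpose_apply, Finset.mul_sum]
      exact Finset.sum_congr rfl fun i _ => by rw [hBB]; ring
    rw [h4, ← mul_assoc, hsV2, one_mul]
    have h5 : ∑ i, B (σA i) (σV ℓ) * φ ((Aᵀ.mulVec x) (σA i) + θ (σA i))
        = ∑ j, B j (σV ℓ) * φ ((Aᵀ.mulVec x) j + θ j) :=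
      Equiv.sum_comp σA (fun j => B j (σV ℓ) * φ ((Aᵀ.mulVec x) j + θ j))
    rw [h5]
    simp only [Matrix.mulVec, dotProduct, Matrix.transpose_apply]
  calc (∑ ℓ, φ ((Bᵀ.mulVec fun i => φ ((Aᵀ.mulVec x) i + θ i)) ℓ + τ ℓ))
      = ∑ ℓ, φ ((Bᵀ.mulVec fun i => φ ((Aᵀ.mulVec x) i + θ i)) (σV ℓ) + τ (σV ℓ)) :=
        (Equiv.sum_comp σV fun ℓ => φ ((Bᵀ.mulVec fun i => φ ((Aᵀ.mulVec x) i + θ i)) ℓ + τ ℓ)).symm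
    _ = _ := by
        exact Finset.sum_congr rfl fun ℓ _ => by rw [hRHS ℓ]
end

section
/- Suppose there exist diagonal sign matrices S_A ∈ R^{m0×m0}, S_V ∈ R^{m1×m1} (diagonal entries ±1) and permutation matrices π_A ∈ R^{m0×m0}, π_V ∈ R^{m1×m1} such that A·π_A = Â·S_A and V·π_V = V̂·S_V. Then there exist diagonal matrices D_1 ∈ R^{m1×m1} and D_2 ∈ R^{m0×m0} such that f(x) = 1^T·φ(D_1·V̂^T·Â^{−T}·D_2·φ(S_A·Â^T x + π_A^T θ) + π_V^T τ) for all x ∈ R^{m0} (φ applied entrywise, Â^{−T} the inverse transpose of Â). -/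
open Matrix

lemma pmT_mul_pm {n : ℕ} (σ : Equiv.Perm (Fin n)) :
    (Matrix.of fun i j => if i = σ j then (1:ℝ) else 0)ᵀ *
      (Matrix.of fun i j => if i = σ j then (1:ℝ) else 0) = 1 := by
  ext i j
  simp only [Matrix.mul_apply, Matrix.transpose_apply, Matrix.of_apply, Matrix.one_apply,
    ite_mul, one_mul, zero_mul]
  simp [Finset.sum_ite_eq, Equiv.apply_eq_iff_eq]

lemma pm_mul_pmT {n : ℕ} (σ : Equiv.Perm (Fin n)) :
    (Matrix.of fun i j => if i = σ j then (1:ℝ) else 0) *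
      (Matrix.of fun i j => if i = σ j then (1:ℝ) else 0)ᵀ = 1 :=
  mul_eq_one_comm.mpr (pmT_mul_pm σ)

lemma pm_mul_diag {n : ℕ} (σ : Equiv.Perm (Fin n)) (d : Fin n → ℝ) :
    (Matrix.of fun i j => if i = σ j then (1:ℝ) else 0) * Matrix.diagonal (fun j => d (σ j)) =
      Matrix.diagonal d * (Matrix.of fun i j => if i = σ j then (1:ℝ) else 0) := by
  ext i j
  rw [Matrix.mul_diagonal, Matrix.diagonal_mul]
  simp only [Matrix.of_apply]
  by_cases h : i = σ j
  · subst h; simp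
  · simp [h]

lemma diag_mul_pmT {n : ℕ} (σ : Equiv.Perm (Fin n)) (d : Fin n → ℝ) :
    Matrix.diagonal (fun i => d (σ i)) * (Matrix.of fun i j => if i = σ j then (1:ℝ) else 0)ᵀ =
      (Matrix.of fun i j => if i = σ j then (1:ℝ) else 0)ᵀ * Matrix.diagonal d := by
  ext i j
  rw [Matrix.mul_diagonal, Matrix.diagonal_mul]
  simp only [Matrix.transpose_apply, Matrix.of_apply]
  by_cases h : j = σ i
  · subst h; simp
  · simp [h]

lemma pmT_mulVec {n : ℕ} (σ : Equiv.Perm (Fin n)) (u : Fin n → ℝ) :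
    (Matrix.of fun i j => if i = σ j then (1:ℝ) else 0)ᵀ.mulVec u = fun i => u (σ i) := by
  ext i
  simp [Matrix.mulVec, dotProduct, Finset.sum_ite_eq]

lemma pm_mulVec {n : ℕ} (σ : Equiv.Perm (Fin n)) (u : Fin n → ℝ) :
    (Matrix.of fun i j => if i = σ j then (1:ℝ) else 0).mulVec (fun j => u (σ j)) = u := by
  ext i
  simp only [Matrix.mulVec, dotProduct, Matrix.of_apply]
  rw [show (∑ k, (if i = σ k then (1:ℝ) else 0) * u (σ k)) = ∑ j, (if i = j then (1:ℝ) else 0) * u j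
    from Equiv.sum_comp σ (fun j => (if i = j then (1:ℝ) else 0) * u j)]
  simp [Finset.sum_ite_eq]

/-- reparametrization of a two-layer network using the recovered entangled
weights and two unknown diagonal matrices. -/
theorem network_reparametrization_diagonal
    (m0 m1 : ℕ) (φ : ℝ → ℝ) (hφ : Differentiable ℝ φ)
    (A : Matrix (Fin m0) (Fin m0) ℝ) (hA : IsUnit A.det)
    (B : Matrix (Fin m0) (Fin m1) ℝ) (hB : ∀ ℓ, vnorm (fun i => B i ℓ) = 1)
    (θ : Fin m0 → ℝ) (τ : Fin m1 → ℝ)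
    (f : (Fin m0 → ℝ) → ℝ)
    (hf : ∀ x, f x = ∑ ℓ, φ ((Bᵀ.mulVec fun i => φ ((Aᵀ.mulVec x) i + θ i)) ℓ + τ ℓ))
    (G : Matrix (Fin m0) (Fin m0) ℝ) (hG : G = Matrix.diagonal fun i => deriv φ (θ i))
    (hG0 : ∀ i, deriv φ (θ i) ≠ 0)
    (hAGb : ∀ ℓ : Fin m1, A.mulVec (G.mulVec (fun i => B i ℓ)) ≠ 0)
    (V : Matrix (Fin m0) (Fin m1) ℝ)
    (hV : ∀ ℓ i, V i ℓ = (vnorm (A.mulVec (G.mulVec (fun k => B k ℓ))))⁻¹ *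
      (A.mulVec (G.mulVec (fun k => B k ℓ))) i)
    (Ahat : Matrix (Fin m0) (Fin m0) ℝ) (hAhat : IsUnit Ahat.det)
    (Vhat : Matrix (Fin m0) (Fin m1) ℝ)
    (SA : Matrix (Fin m0) (Fin m0) ℝ)
    (hSA : ∃ s : Fin m0 → ℝ, (∀ i, s i = 1 ∨ s i = -1) ∧ SA = Matrix.diagonal s)
    (SV : Matrix (Fin m1) (Fin m1) ℝ)
    (hSV : ∃ s : Fin m1 → ℝ, (∀ i, s i = 1 ∨ s i = -1) ∧ SV = Matrix.diagonal s)
    (πA : Matrix (Fin m0) (Fin m0) ℝ)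
    (hπA : ∃ σ : Equiv.Perm (Fin m0), πA = Matrix.of fun i j => if i = σ j then (1 : ℝ) else 0)
    (πV : Matrix (Fin m1) (Fin m1) ℝ)
    (hπV : ∃ σ : Equiv.Perm (Fin m1), πV = Matrix.of fun i j => if i = σ j then (1 : ℝ) else 0)
    (hAeq : A * πA = Ahat * SA) (hVeq : V * πV = Vhat * SV) :
    ∃ (D1 : Matrix (Fin m1) (Fin m1) ℝ) (D2 : Matrix (Fin m0) (Fin m0) ℝ),
      D1.IsDiag ∧ D2.IsDiag ∧
      ∀ x, f x = ∑ ℓ, φ (((D1 * Vhatᵀ * (Ahat⁻¹)ᵀ * D2).mulVec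
          fun i => φ (((SA * Ahatᵀ).mulVec x) i + (πAᵀ.mulVec θ) i)) ℓ + (πVᵀ.mulVec τ) ℓ) := by
  obtain ⟨sA, hsA, rfl⟩ := hSA
  obtain ⟨sV, hsV, rfl⟩ := hSV
  obtain ⟨σA, rfl⟩ := hπA
  obtain ⟨σV, rfl⟩ := hπV
  set PA : Matrix (Fin m0) (Fin m0) ℝ :=
    Matrix.of fun i j => if i = σA j then (1 : ℝ) else 0 with hPA
  set PV : Matrix (Fin m1) (Fin m1) ℝ :=
    Matrix.of fun i j => if i = σV j then (1 : ℝ) else 0 with hPV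
  set gθ : Fin m0 → ℝ := fun i => deriv φ (θ i) with hgθ
  set nrm : Fin m1 → ℝ := fun ℓ => vnorm (A.mulVec (G.mulVec fun k => B k ℓ)) with hnrm
  have hsA2 : ∀ i, sA i * sA i = 1 := by
    intro i; rcases hsA i with h | h <;> rw [h] <;> norm_num
  have hsV2 : ∀ i, sV i * sV i = 1 := by
    intro i; rcases hsV i with h | h <;> rw [h] <;> norm_num
  have hSA2 : Matrix.diagonal sA * Matrix.diagonal sA = 1 := by
    rw [Matrix.diagonal_mul_diagonal]
    simp only [hsA2]; exact Matrix.diagonal_one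
  have hSV2 : Matrix.diagonal sV * Matrix.diagonal sV = 1 := by
    rw [Matrix.diagonal_mul_diagonal]
    simp only [hsV2]; exact Matrix.diagonal_one
  have hn0 : ∀ ℓ, nrm ℓ ≠ 0 := by
    intro ℓ
    have hv := hAGb ℓ
    obtain ⟨i0, hi0⟩ := Function.ne_iff.mp hv
    have hpos : 0 < ∑ i, (A.mulVec (G.mulVec fun k => B k ℓ)) i ^ 2 := by
      apply Finset.sum_pos' (fun i _ => sq_nonneg _)
      exact ⟨i0, Finset.mem_univ _, pow_two_pos_of_ne_zero hi0⟩
    have : 0 < nrm ℓ := Real.sqrt_pos.mpr hpos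
    exact ne_of_gt this
  -- Ahat and Vhat in terms of the originals
  have hAhat' : Ahat = A * PA * Matrix.diagonal sA := by
    calc Ahat = Ahat * (Matrix.diagonal sA * Matrix.diagonal sA) := by rw [hSA2, mul_one]
    _ = (Ahat * Matrix.diagonal sA) * Matrix.diagonal sA := by rw [mul_assoc]
    _ = A * PA * Matrix.diagonal sA := by rw [← hAeq]
  have hVhat' : Vhat = V * PV * Matrix.diagonal sV := by
    calc Vhat = Vhat * (Matrix.diagonal sV * Matrix.diagonal sV) := by
          rw [hSV2, Matrix.mul_one]
    _ = (Vhat * Matrix.diagonal sV) * Matrix.diagonal sV := by rw [Matrix.mul_assoc]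
    _ = V * PV * Matrix.diagonal sV := by rw [← hVeq]
  -- inverse of Ahat
  have hAinv : Ahat⁻¹ = Matrix.diagonal sA * PAᵀ * A⁻¹ := by
    apply Matrix.inv_eq_right_inv
    rw [hAhat']
    calc A * PA * Matrix.diagonal sA * (Matrix.diagonal sA * PAᵀ * A⁻¹)
        = A * (PA * ((Matrix.diagonal sA * Matrix.diagonal sA) * (PAᵀ * A⁻¹))) := by
          simp only [mul_assoc]
    _ = A * (PA * (PAᵀ * A⁻¹)) := by rw [hSA2, one_mul]
    _ = A * ((PA * PAᵀ) * A⁻¹) := by rw [mul_assoc]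
    _ = A * A⁻¹ := by rw [pm_mul_pmT σA, one_mul]
    _ = 1 := Matrix.mul_nonsing_inv A hA
  have hAinvT : (Ahat⁻¹)ᵀ = (A⁻¹)ᵀ * PA * Matrix.diagonal sA := by
    rw [hAinv, Matrix.transpose_mul, Matrix.transpose_mul, Matrix.transpose_transpose,
      Matrix.diagonal_transpose, mul_assoc]
  -- V in terms of A, G, B
  have hVmat : V = A * G * B * Matrix.diagonal (fun ℓ => (nrm ℓ)⁻¹) := by
    ext i ℓ
    rw [Matrix.mul_diagonal]
    have : (A * G * B) i ℓ = (A.mulVec (G.mulVec fun k => B k ℓ)) i := by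
      rw [Matrix.mulVec_mulVec]
      simp [Matrix.mul_apply, Matrix.mulVec, dotProduct]
    rw [this, hV ℓ i, mul_comm]
  have hVT : Vᵀ = Matrix.diagonal (fun ℓ => (nrm ℓ)⁻¹) * Bᵀ * G * Aᵀ := by
    rw [hVmat]
    simp only [Matrix.transpose_mul, Matrix.diagonal_transpose]
    rw [hG, Matrix.diagonal_transpose]
    simp only [Matrix.mul_assoc]
  refine ⟨Matrix.diagonal (fun ℓ => nrm (σV ℓ) * sV ℓ),
    Matrix.diagonal (fun i => sA i * (gθ (σA i))⁻¹),
    Matrix.isDiag_diagonal _, Matrix.isDiag_diagonal _, ?_⟩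
  -- the key matrix identity
  have hM : Matrix.diagonal (fun ℓ => nrm (σV ℓ) * sV ℓ) * Vhatᵀ * (Ahat⁻¹)ᵀ *
      Matrix.diagonal (fun i => sA i * (gθ (σA i))⁻¹) = PVᵀ * (Bᵀ * PA) := by
    have hVhatT : Vhatᵀ = Matrix.diagonal sV * PVᵀ * Vᵀ := by
      rw [hVhat', Matrix.transpose_mul, Matrix.transpose_mul, Matrix.diagonal_transpose, Matrix.mul_assoc]
    rw [hVhatT, hAinvT, hVT]
    -- collapse SA * D2
    have h1 : Matrix.diagonal sA * Matrix.diagonal (fun i => sA i * (gθ (σA i))⁻¹) =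
        Matrix.diagonal (fun i => (gθ (σA i))⁻¹) := by
      have he : (fun i => sA i * (sA i * (gθ (σA i))⁻¹)) = fun i => (gθ (σA i))⁻¹ := by
        funext i; rw [← mul_assoc, hsA2 i, one_mul]
      rw [Matrix.diagonal_mul_diagonal, he]
    have h2 : PA * Matrix.diagonal (fun i => (gθ (σA i))⁻¹) =
        Matrix.diagonal (fun i => (gθ i)⁻¹) * PA := pm_mul_diag σA (fun i => (gθ i)⁻¹)
    have h3 : G * Matrix.diagonal (fun i => (gθ i)⁻¹) = 1 := by
      rw [hG, Matrix.diagonal_mul_diagonal]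
      have : ∀ i, gθ i * (gθ i)⁻¹ = 1 := fun i => mul_inv_cancel₀ (hG0 i)
      simp only [this]; exact Matrix.diagonal_one
    have h4 : Matrix.diagonal (fun ℓ => nrm (σV ℓ) * sV ℓ) * Matrix.diagonal sV =
        Matrix.diagonal (fun ℓ => nrm (σV ℓ)) := by
      have he : (fun ℓ => nrm (σV ℓ) * sV ℓ * sV ℓ) = fun ℓ => nrm (σV ℓ) := by
        funext ℓ; rw [mul_assoc, hsV2 ℓ, mul_one]
      rw [Matrix.diagonal_mul_diagonal, he]
    have h5 : Matrix.diagonal (fun ℓ => nrm (σV ℓ)) * PVᵀ = PVᵀ * Matrix.diagonal nrm :=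
      diag_mul_pmT σV nrm
    have h6 : Matrix.diagonal nrm * Matrix.diagonal (fun ℓ => (nrm ℓ)⁻¹) = 1 := by
      rw [Matrix.diagonal_mul_diagonal]
      have : ∀ ℓ, nrm ℓ * (nrm ℓ)⁻¹ = 1 := fun ℓ => mul_inv_cancel₀ (hn0 ℓ)
      simp only [this]; exact Matrix.diagonal_one
    have hAT : Aᵀ * (A⁻¹)ᵀ = 1 := by
      rw [← Matrix.transpose_mul, Matrix.nonsing_inv_mul A hA, Matrix.transpose_one]
    simp only [Matrix.mul_assoc]
    rw [← Matrix.mul_assoc Aᵀ (A⁻¹)ᵀ, hAT, Matrix.one_mul]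
    rw [h1, h2]
    rw [← Matrix.mul_assoc G (Matrix.diagonal fun i => (gθ i)⁻¹) PA, h3, Matrix.one_mul]
    rw [← Matrix.mul_assoc (Matrix.diagonal fun ℓ => nrm (σV ℓ) * sV ℓ)
      (Matrix.diagonal sV), h4]
    rw [← Matrix.mul_assoc (Matrix.diagonal fun ℓ => nrm (σV ℓ)) PVᵀ, h5]
    rw [Matrix.mul_assoc PVᵀ (Matrix.diagonal nrm), ← Matrix.mul_assoc (Matrix.diagonal nrm),
      h6, Matrix.one_mul]
  -- SA * Ahatᵀ = πAᵀ * Aᵀ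
  have hSAT : Matrix.diagonal sA * Ahatᵀ = PAᵀ * Aᵀ := by
    rw [hAhat']
    simp only [Matrix.transpose_mul, Matrix.diagonal_transpose]
    rw [← Matrix.mul_assoc (Matrix.diagonal sA) (Matrix.diagonal sA), hSA2, Matrix.one_mul]
  have pmT_A : ∀ u : Fin m0 → ℝ, PAᵀ *ᵥ u = fun i => u (σA i) := fun u => pmT_mulVec σA u
  have pmT_V : ∀ u : Fin m1 → ℝ, PVᵀ *ᵥ u = fun ℓ => u (σV ℓ) := fun u => pmT_mulVec σV u
  intro x
  rw [hf x, hM, hSAT]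
  simp only [← Matrix.mulVec_mulVec, pmT_A]
  have key : PA *ᵥ (fun i => φ ((Aᵀ *ᵥ x) (σA i) + θ (σA i))) =
      fun k => φ ((Aᵀ *ᵥ x) k + θ k) :=
    pm_mulVec σA (fun k => φ ((Aᵀ *ᵥ x) k + θ k))
  rw [key]
  simp only [pmT_V]
  exact (Equiv.sum_comp σV (fun ℓ => φ ((Bᵀ *ᵥ fun k => φ ((Aᵀ *ᵥ x) k + θ k)) ℓ + τ ℓ))).symm
end

section
/- Let z_1,…,z_m ∈ R^m be unit vectors and let 1 < C_F < 2 be such that Σ_{i=1}^m ⟨z_j, z_i⟩² ≤ C_F for every j ∈ {1,…,m}. Then the rank-one matrices z_1 ⊗ z_1, …, z_m ⊗ z_m are linearly independent in the space of m×m real matrices. -/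
open Matrix

/-- unit vectors with small mutual coherence have linearly independent
rank-one tensors. -/
theorem rank_one_tensors_linearIndependent
    (m : ℕ) (z : Fin m → Fin m → ℝ)
    (hz : ∀ j, vnorm (z j) = 1)
    (CF : ℝ) (h1 : 1 < CF) (h2 : CF < 2)
    (hcoh : ∀ j, ∑ i, (dotProduct (z j) (z i)) ^ 2 ≤ CF) :
    LinearIndependent ℝ fun j => vecMulVec (z j) (z j) := by
  rw [Fintype.linearIndependent_iff]
  intro g hg
  have hnorm : ∀ j, ∑ i, z j i ^ 2 = 1 := by
    intro j
    have h := hz j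
    unfold vnorm at h
    have hnn : (0:ℝ) ≤ ∑ i, z j i ^ 2 :=
      Finset.sum_nonneg fun i _ => sq_nonneg (z j i)
    nlinarith [Real.sq_sqrt hnn]
  have hdk : ∀ k, dotProduct (z k) (z k) = 1 := by
    intro k
    simpa [dotProduct, sq] using hnorm k
  have key : ∀ k, ∑ j, g j * (dotProduct (z j) (z k)) ^ 2 = 0 := by
    intro k
    have h := congrArg (fun M : Matrix (Fin m) (Fin m) ℝ =>
      ∑ a, ∑ b, M a b * (z k a * z k b)) hg
    simp only [Matrix.sum_apply, Matrix.smul_apply, vecMulVec_apply, smul_eq_mul,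
      Matrix.zero_apply, zero_mul, Finset.sum_const_zero] at h
    calc ∑ j, g j * (dotProduct (z j) (z k)) ^ 2
        = ∑ j, ∑ a, ∑ b, g j * ((z j a * z k a) * (z j b * z k b)) := by
          refine Finset.sum_congr rfl fun j _ => ?_
          rw [dotProduct, sq, Finset.sum_mul_sum, Finset.mul_sum]
          refine Finset.sum_congr rfl fun a _ => ?_
          rw [Finset.mul_sum]
      _ = ∑ a, ∑ b, ∑ j, g j * ((z j a * z k a) * (z j b * z k b)) := by
          rw [Finset.sum_comm]
          refine Finset.sum_congr rfl fun a _ => ?_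
          rw [Finset.sum_comm]
      _ = ∑ a, ∑ b, (∑ j, g j * (z j a * z j b)) * (z k a * z k b) := by
          refine Finset.sum_congr rfl fun a _ => Finset.sum_congr rfl fun b _ => ?_
          rw [Finset.sum_mul]
          exact Finset.sum_congr rfl fun j _ => by ring
      _ = 0 := h
  intro j
  obtain ⟨k, -, hk⟩ := Finset.exists_max_image (Finset.univ : Finset (Fin m))
    (fun j => |g j|) ⟨j, Finset.mem_univ j⟩
  have hk' : ∀ i, |g i| ≤ |g k| := fun i => hk i (Finset.mem_univ i)
  have e := key k
  rw [← Finset.add_sum_erase _ _ (Finset.mem_univ k), hdk k] at e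
  have hcoh' : ∑ i ∈ Finset.univ.erase k, (dotProduct (z i) (z k)) ^ 2 ≤ CF - 1 := by
    have h' := hcoh k
    have hs : ∑ i, (dotProduct (z k) (z i)) ^ 2
        = 1 + ∑ i ∈ Finset.univ.erase k, (dotProduct (z i) (z k)) ^ 2 := by
      rw [← Finset.add_sum_erase _ _ (Finset.mem_univ k), hdk k]
      norm_num
      exact Finset.sum_congr rfl fun i _ => by rw [dotProduct_comm]
    linarith [hs ▸ h']
  have habs : |g k| ≤ |g k| * (CF - 1) := by
    have e1 : g k = -∑ i ∈ Finset.univ.erase k, g i * (dotProduct (z i) (z k)) ^ 2 := by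
      linarith [e]
    calc |g k| = |∑ i ∈ Finset.univ.erase k, g i * (dotProduct (z i) (z k)) ^ 2| := by
          rw [e1, abs_neg]
      _ ≤ ∑ i ∈ Finset.univ.erase k, |g i * (dotProduct (z i) (z k)) ^ 2| :=
          Finset.abs_sum_le_sum_abs _ _
      _ = ∑ i ∈ Finset.univ.erase k, |g i| * (dotProduct (z i) (z k)) ^ 2 := by
          refine Finset.sum_congr rfl fun i _ => ?_
          rw [abs_mul, abs_pow, sq_abs]
      _ ≤ ∑ i ∈ Finset.univ.erase k, |g k| * (dotProduct (z i) (z k)) ^ 2 :=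
          Finset.sum_le_sum fun i _ =>
            mul_le_mul_of_nonneg_right (hk' i) (sq_nonneg _)
      _ = |g k| * ∑ i ∈ Finset.univ.erase k, (dotProduct (z i) (z k)) ^ 2 := by
          rw [Finset.mul_sum]
      _ ≤ |g k| * (CF - 1) :=
          mul_le_mul_of_nonneg_left hcoh' (abs_nonneg _)
  have hgk : |g k| = 0 := by nlinarith [abs_nonneg (g k)]
  have := hk' j
  rw [hgk] at this
  exact abs_nonpos_iff.mp this
end
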